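/- arXiv:hep-th/9309024 — 3 statements merged into one kernel-verified Lean document; each statement's English description precedes it below -/
import Mathlib

section
/- Fix a ∈ I and suppose the twisted weights satisfy the eigenvalue property ∑_d N^d_{bc} ω²_d(a) = ω²_b(a) ω²_c(a) for all b,c ∈ I, and suppose there exists b ∈ I with ω²_b ≠ ω²_b(a). Then ∑_{c∈I} ω²_c ω²_{c*}(a) = 0. -/
/-!
Both `ω²` and the twisted weights are characters of the fusion rules. Multiplying the pairing
`S = ∑_c ω²_c ω²_{c*}(a)` by `ω²_b(a)` and expanding with the fusion rule, the symmetry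
`N^d_{bc*} = N^c_{bd*}` trades the roles of the two characters, so `ω²_b(a) S = ω²_b S`.
Hence `S = 0` as soon as the two characters differ at some `b`.
-/

section

open Finset

variable {I R : Type*} [Fintype I]

def IsFusionCharacter [Semiring R] (N : I → I → I → ℕ) (χ : I → R) : Prop :=
  ∀ b c, ∑ d, (N b c d : R) * χ d = χ b * χ c

namespace IsFusionCharacter

variable {N : I → I → I → ℕ} {inv : I → I} {χ ψ : I → R}

theorem mul_sum_mul_comp_inv [CommSemiring R] (hinv : Function.Involutive inv)
    (hN : ∀ b c d, N b (inv c) d = N b (inv d) c)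
    (hχ : IsFusionCharacter N χ) (hψ : IsFusionCharacter N ψ) (b : I) :
    ψ b * ∑ c, χ c * ψ (inv c) = χ b * ∑ c, χ c * ψ (inv c) :=
  calc ψ b * ∑ c, χ c * ψ (inv c)
      = ∑ c, χ c * (ψ b * ψ (inv c)) := by
        rw [mul_sum]
        exact sum_congr rfl fun c _ => mul_left_comm _ _ _
    _ = ∑ c, χ c * ∑ d, (N b (inv d) c : R) * ψ d := by
        refine sum_congr rfl fun c _ => ?_
        simp_rw [← hψ b (inv c), hN]
    _ = ∑ d, ψ d * ∑ c, (N b (inv d) c : R) * χ c := by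
        simp_rw [mul_sum]
        rw [sum_comm]
        refine sum_congr rfl fun d _ => sum_congr rfl fun c _ => ?_
        ring
    _ = χ b * ∑ d, χ (inv d) * ψ d := by
        rw [mul_sum]
        refine sum_congr rfl fun d _ => ?_
        rw [hχ]
        ring
    _ = χ b * ∑ c, χ c * ψ (inv c) := by
        rw [← hinv.bijective.sum_comp fun c => χ c * ψ (inv c)]
        simp only [hinv _]

theorem sum_mul_comp_inv_eq_zero [CommRing R] [NoZeroDivisors R]
    (hinv : Function.Involutive inv) (hN : ∀ b c d, N b (inv c) d = N b (inv d) c)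
    (hχ : IsFusionCharacter N χ) (hψ : IsFusionCharacter N ψ) (hne : ∃ b, χ b ≠ ψ b) :
    ∑ c, χ c * ψ (inv c) = 0 := by
  obtain ⟨b, hb⟩ := hne
  have hsub : (χ b - ψ b) * ∑ c, χ c * ψ (inv c) = 0 := by
    rw [sub_mul, mul_sum_mul_comp_inv hinv hN hχ hψ b, sub_self]
  exact (mul_eq_zero.mp hsub).resolve_left (sub_ne_zero.mpr hb)

end IsFusionCharacter

end

open Finset in
theorem twisted_weight_orthogonality_general
    {I : Type*} [Fintype I]
    (inv : I → I) (hinv : ∀ i, inv (inv i) = i)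
    (N : I → I → I → ℕ)
    (hNsym : ∀ b c d, N b (inv c) d = N b (inv d) c)
    (ωw : I → ℂ)
    (hmul : ∀ b c, ∑ d, (ωw d) ^ 2 * (N b c d : ℂ) = (ωw b) ^ 2 * (ωw c) ^ 2)
    (f : I → ℂ)
    (heig : ∀ b c, ∑ d, (N b c d : ℂ) * f d = f b * f c)
    (hne : ∃ b, (ωw b) ^ 2 ≠ f b) :
    ∑ c, (ωw c) ^ 2 * f (inv c) = 0 := by
  have hω : IsFusionCharacter N fun i => ωw i ^ 2 := fun b c => by
    simp_rw [mul_comm (N b c _ : ℂ)]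
    exact hmul b c
  exact IsFusionCharacter.sum_mul_comp_inv_eq_zero hinv hNsym hω heig hne

open Finset in
/-- Fix `a` and suppose the twisted weights `f = ω²_·(a)` satisfy the eigenvalue
property `∑_d N^d_{bc} f d = f b * f c` and `∃ b, ω²_b ≠ f b`.
Then `∑_c ω²_c f(c*) = 0`.  (`N b c d` denotes `N^d_{bc}`.) -/
theorem twisted_weight_orthogonality
    {I : Type*} [Fintype I]
    (inv : I → I) (hinv : ∀ i, inv (inv i) = i)
    (N : I → I → I → ℕ)
    (hNsym : ∀ b c d, N b (inv c) d = N b (inv d) c)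
    (hNcomm : ∀ b c d, N b c d = N c b d)
    (ωw : I → ℂ) (hωw : ∀ i, ωw i ≠ 0)
    (hωstar : ∀ c, (ωw (inv c)) ^ 2 = (ωw c) ^ 2)
    (hmul : ∀ b c, ∑ d, (ωw d) ^ 2 * (N b c d : ℂ) = (ωw b) ^ 2 * (ωw c) ^ 2)
    (f : I → ℂ)
    (heig : ∀ b c, ∑ d, (N b c d : ℂ) * f d = f b * f c)
    (hne : ∃ b, (ωw b) ^ 2 ≠ f b) :
    ∑ c, (ωw c) ^ 2 * f (inv c) = 0 :=
  twisted_weight_orthogonality_general inv hinv N hNsym ωw hmul f heig hne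
end

section
/- Assume S is symmetric, S_{a*b} = S_{ab*}, S_{0d} ≠ 0 for all d, the unitarity relation ∑_b S_{ab} S_{bc*} = δ_{ac} holds, and for every a ∈ I the eigenvector relation ∑_e N^e_{cd} S_{ea} = S_{ca} S_{da} / S_{0a} holds. Then the Verlinde formula holds: N^c_{ab} = ∑_{d∈I} S_{ad} S_{bd} S_{c*d} / S_{0d} for all a, b, c ∈ I. -/
/- The unitarity relation says that `S` has right inverse `T_{bc} = S_{b c*}`. The eigenvector
relation says that the row `N_{ab}` of fusion coefficients is sent by `S` to the row
`d ↦ S_{ad} S_{bd} / S_{0d}`; multiplying by `T` on the right recovers `N_{ab}`. -/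

open Finset Matrix

theorem Matrix.vecMul_eq_of_vecMul_eq_of_mul_eq_one {ι R : Type*} [Fintype ι] [DecidableEq ι]
    [Semiring R] {S T : Matrix ι ι R} (hST : S * T = 1) {v w : ι → R} (hv : v ᵥ* S = w) :
    v = w ᵥ* T := by
  rw [← hv, vecMul_vecMul, hST, vecMul_one]

open Finset in
theorem verlinde_formula_general
    {I : Type*} [Fintype I] [DecidableEq I]
    (inv : I → I) (z : I)
    (N : I → I → I → ℂ)
    (S : I → I → ℂ)
    (hSsym : ∀ a b, S a b = S b a)
    (hunit : ∀ a c, ∑ b, S a b * S b (inv c) = if a = c then 1 else 0)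
    (heig : ∀ a c d, ∑ e, N c d e * S e a = S c a * S d a / S z a) :
    ∀ a b c, N a b c = ∑ d, S a d * S b d * S (inv c) d / S z d := by
  intro a b c
  have hST : of S * of (fun b c => S b (inv c)) = 1 := by
    ext i j
    simp only [mul_apply, of_apply, hunit, one_apply]
  have hN : N a b ᵥ* of S = fun d => S a d * S b d / S z d := funext fun d => heig d a b
  calc N a b c = ∑ d, S a d * S b d / S z d * S d (inv c) := by
        rw [vecMul_eq_of_vecMul_eq_of_mul_eq_one hST hN]; rfl
    _ = ∑ d, S a d * S b d * S (inv c) d / S z d :=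
        sum_congr rfl fun d _ => by rw [hSsym d]; ring

open Finset in
/-- Verlinde formula: under unitarity, symmetry, `S_{0d} ≠ 0` and the eigenvector
relation `∑_e N^e_{cd} S_{ea} = S_{ca} S_{da} / S_{0a}`, one has
`N^c_{ab} = ∑_d S_{ad} S_{bd} S_{c*d} / S_{0d}`.  (`N a b c` denotes `N^c_{ab}`.) -/
theorem verlinde_formula
    {I : Type*} [Fintype I] [DecidableEq I]
    (inv : I → I) (z : I) (hinv : ∀ i, inv (inv i) = i) (hz : inv z = z)
    (N : I → I → I → ℂ)
    (S : I → I → ℂ)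
    (hSsym : ∀ a b, S a b = S b a)
    (hSstar : ∀ a b, S (inv a) b = S a (inv b))
    (hS0 : ∀ d, S z d ≠ 0)
    (hunit : ∀ a c, ∑ b, S a b * S b (inv c) = if a = c then 1 else 0)
    (heig : ∀ a c d, ∑ e, N c d e * S e a = S c a * S d a / S z a) :
    ∀ a b c, N a b c = ∑ d, S a d * S b d * S (inv c) d / S z d :=
  verlinde_formula_general inv z N S hSsym hunit heig
end

section
/- Given the Verlinde formula N^c_{ab} = ∑_d S_{ad} S_{bd} S_{c*d} / S_{0d} together with unitarity ∑_b S_{ab}S_{bc*} = δ_{ac}, symmetry of S, and S_{0d} ≠ 0, the genus-g dimension formula holds: tr((∑_a N_{a*} N_a)^{g-1}) = ∑_{d∈I} (λ_d)^{g-1}, where λ_d = ∑_a S_{ad} S_{a*d} / S_{0d}², N_a being the matrix (N_a)_{b,c} = N^b_{ac}. -/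
/-!
The Verlinde formula says that `S` diagonalizes the fusion rules simultaneously:
`N_a = P · diag(S_{ad} / S_{0d}) · Sᵀ` with `P_{bd} = S_{b*d}`, and unitarity makes `P` the
inverse of `S`. Conjugation by a unit is a ring homomorphism, so `∑_a N_{a*} N_a` is conjugate
to `diag(λ_d)`, its powers to `diag(λ_d^{g-1})`, and the trace is invariant under conjugation.
-/

open Finset Matrix

namespace Matrix

variable {I R K : Type*} [Fintype I] [DecidableEq I] [Semiring R] [Field K] {inv : I → I}

theorem submatrix_inv_mul_self_of_unitary {S : Matrix I I R} (hinv : Function.Involutive inv)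
    (hunit : ∀ a c, ∑ b, S a b * S b (inv c) = if a = c then 1 else 0) :
    S.submatrix inv id * S = 1 := by
  ext b c
  simpa [mul_apply, one_apply, hinv c, hinv.injective.eq_iff] using hunit (inv b) (inv c)

theorem verlinde_eq_submatrix_mul_diagonal_mul_transpose (S : Matrix I I K) (a z : I) :
    (of fun b c => ∑ d, S a d * S c d * S (inv b) d / S z d)
      = S.submatrix inv id * diagonal (fun d => S a d / S z d) * Sᵀ := by
  ext b c
  rw [mul_apply]
  simp only [of_apply, mul_diagonal, submatrix_apply, id, transpose_apply]
  exact sum_congr rfl fun d _ => by ring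

theorem sum_diagonal_mul_diagonal_div (S : Matrix I I K) (z : I) :
    ∑ a, diagonal (fun d => S (inv a) d / S z d) * diagonal (fun d => S a d / S z d)
      = diagonal fun d => ∑ a, S a d * S (inv a) d / S z d ^ 2 := by
  ext b c
  rw [sum_apply]
  by_cases hbc : b = c
  · subst hbc
    simp only [diagonal_mul_diagonal, diagonal_apply_eq]
    exact sum_congr rfl fun a _ => by ring
  · simp [diagonal_apply_ne _ hbc]

end Matrix

theorem genus_dimension_formula_general
    {I : Type*} [Fintype I] [DecidableEq I]
    (inv : I → I) (z : I) (hinv : ∀ i, inv (inv i) = i)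
    (S : Matrix I I ℂ)
    (hSsym : ∀ a b, S a b = S b a)
    (hunit : ∀ a c, ∑ b, S a b * S b (inv c) = if a = c then 1 else 0)
    (N : I → I → I → ℂ)
    (hN : ∀ a b c, N a b c = ∑ d, S a d * S b d * S (inv c) d / S z d)
    (Nmat : I → Matrix I I ℂ)
    (hNmat : ∀ a, Nmat a = Matrix.of fun b c => N a c b)
    (g : ℕ) :
    Matrix.trace ((∑ a, Nmat (inv a) * Nmat a) ^ (g - 1))
      = ∑ d, (∑ a, S a d * S (inv a) d / (S z d) ^ 2) ^ (g - 1) := by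
  let u : (Matrix I I ℂ)ˣ :=
    Units.mkOfMulEqOne _ _ (submatrix_inv_mul_self_of_unitary hinv hunit)
  let conj := MulSemiringAction.toRingHom _ (Matrix I I ℂ) (ConjAct.toConjAct u)
  have hconj : ∀ X, conj X = S.submatrix inv id * X * S := fun _ => rfl
  have hStranspose : Sᵀ = S := IsSymm.ext fun a b => hSsym b a
  have hfusion : ∀ a, Nmat a = conj (diagonal fun d => S a d / S z d) := fun a => by
    have hverlinde := verlinde_eq_submatrix_mul_diagonal_mul_transpose (inv := inv) S a z
    rw [hStranspose] at hverlinde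
    rw [hconj, ← hverlinde, hNmat]
    ext b c
    simp only [of_apply, hN]
  have hcasimir : ∑ a, Nmat (inv a) * Nmat a
      = conj (diagonal fun d => ∑ a, S a d * S (inv a) d / S z d ^ 2) := by
    simp only [hfusion, ← map_mul, ← map_sum, sum_diagonal_mul_diagonal_div]
  rw [hcasimir, ← map_pow, diagonal_pow]
  exact (trace_units_conj u _).trans (trace_diagonal _)

open Finset in
/-- Genus-`g` dimension formula: with `N^c_{ab} := ∑_d S_{ad}S_{bd}S_{c*d}/S_{0d}`
and `(N_a)_{b,c} = N^b_{ac}`, one has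
`tr((∑_a N_{a*} N_a)^{g-1}) = ∑_d λ_d^{g-1}` with `λ_d = ∑_a S_{ad}S_{a*d}/S_{0d}²`. -/
theorem genus_dimension_formula
    {I : Type*} [Fintype I] [DecidableEq I]
    (inv : I → I) (z : I) (hinv : ∀ i, inv (inv i) = i) (hz : inv z = z)
    (S : Matrix I I ℂ)
    (hSsym : ∀ a b, S a b = S b a)
    (hSstar : ∀ a b, S a b = S (inv a) (inv b))
    (hS0 : ∀ d, S z d ≠ 0)
    (hunit : ∀ a c, ∑ b, S a b * S b (inv c) = if a = c then 1 else 0)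
    (N : I → I → I → ℂ)
    (hN : ∀ a b c, N a b c = ∑ d, S a d * S b d * S (inv c) d / S z d)
    (Nmat : I → Matrix I I ℂ)
    (hNmat : ∀ a, Nmat a = Matrix.of fun b c => N a c b)
    (g : ℕ) (hg : 1 ≤ g) :
    Matrix.trace ((∑ a, Nmat (inv a) * Nmat a) ^ (g - 1))
      = ∑ d, (∑ a, S a d * S (inv a) d / (S z d) ^ 2) ^ (g - 1) :=
  genus_dimension_formula_general inv z hinv S hSsym hunit N hN Nmat hNmat g
end
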